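/- Fix t ≥ 0 with r(t) ∈ (r_i, r_o), and suppose x, y, θ, z are differentiable at t with ẋ(t) = v·cos θ(t), ẏ(t) = v·sin θ(t), ż(t) = −κ·z(t) + (1/2)·r(t)², and θ̇(t) = v/d + v·k₁·Ω(β(t)) + v·k₂·((r(t) − d)/r(t))·η(r(t) − d), where β(t) = −κ·z(t) + (1/2)·r(t)². Then the function t ↦ V₂(t) = (1/2)(ē_x(t)² + ē_y(t)²) + d·k₂·V_r(r(t) − d) + d·k₁·∫₀^{β(t)} Ω(τ) dτ is differentiable at t with derivative −d·κ·k₁·β(t)·Ω(β(t)); in particular this derivative is ≤ 0. -/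

import Mathlib

/-- Range r(t) = √((x(t) − x_T)² + (y(t) − y_T)²). -/
noncomputable def rng (x y : ℝ → ℝ) (xT yT : ℝ) (t : ℝ) : ℝ :=
  Real.sqrt ((x t - xT) ^ 2 + (y t - yT) ^ 2)

/-- Transformed error ē_x(t) = (x(t) − x_T)·cos θ(t) + (y(t) − y_T)·sin θ(t). -/
noncomputable def ebx (x y θ : ℝ → ℝ) (xT yT : ℝ) (t : ℝ) : ℝ :=
  (x t - xT) * Real.cos (θ t) + (y t - yT) * Real.sin (θ t)

/-- Transformed error ē_y(t) = −(x(t) − x_T)·sin θ(t) + (y(t) − y_T)·cos θ(t) + d. -/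
noncomputable def eby (x y θ : ℝ → ℝ) (xT yT d : ℝ) (t : ℝ) : ℝ :=
  -(x t - xT) * Real.sin (θ t) + (y t - yT) * Real.cos (θ t) + d

/-- The asymmetric barrier Lyapunov function V_r. -/
noncomputable def Vr (δa δb e : ℝ) : ℝ :=
  if 0 < e then (1 / 2) * Real.log (δb ^ 2 / (δb ^ 2 - e ^ 2))
  else (1 / 2) * Real.log (δa ^ 2 / (δa ^ 2 - e ^ 2))

/-- η(e) = 1/(δ_b² − e²) for e > 0 and η(e) = 1/(δ_a² − e²) for e ≤ 0. -/
noncomputable def eta (δa δb e : ℝ) : ℝ :=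
  if 0 < e then 1 / (δb ^ 2 - e ^ 2) else 1 / (δa ^ 2 - e ^ 2)

/-- The estimation signal β(t) = −κ·z(t) + (1/2)·r(t)². -/
noncomputable def beta (x y : ℝ → ℝ) (z : ℝ → ℝ) (κ xT yT : ℝ) (t : ℝ) : ℝ :=
  -κ * z t + (1 / 2) * (rng x y xT yT t) ^ 2


/-!
Along the unicycle the error vector `(ē_x, ē_y − d)` turns at rate `θ̇` while the vehicle moves
with speed `v` along its heading, so `½(ē_x² + ē_y²)` has derivative `(v − d θ̇) ē_x`. The range
obeys `ṙ = v ē_x / r`, and `β̇ = −κ β + v ē_x` because `r²` is the squared distance. The barrier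
and integral terms therefore contribute `d k₂ (r − d) η(r − d) v ē_x / r` and `d k₁ Ω(β) β̇`, and
the steering law for `θ̇` is exactly the one for which every term carrying `ē_x` cancels, leaving
`−d κ k₁ β Ω(β) ≤ 0`.
-/

open Topology

theorem hasDerivAt_half_log_barrier {c e : ℝ} (h : e ^ 2 < c ^ 2) :
    HasDerivAt (fun e => 1 / 2 * Real.log (c ^ 2 / (c ^ 2 - e ^ 2)))
      (e * (1 / (c ^ 2 - e ^ 2))) e := by
  have hc : c ≠ 0 := by rintro rfl; nlinarith [sq_nonneg e]
  have hgap : c ^ 2 - e ^ 2 ≠ 0 := (sub_pos.2 h).ne'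
  have hquot : HasDerivAt (fun e => c ^ 2 / (c ^ 2 - e ^ 2))
      (c ^ 2 * (2 * e) / (c ^ 2 - e ^ 2) ^ 2) e :=
    ((hasDerivAt_const e (c ^ 2)).div ((hasDerivAt_pow 2 e).const_sub (c ^ 2)) hgap).congr_deriv
      (by ring)
  refine ((hquot.log (div_ne_zero (pow_ne_zero 2 hc) hgap)).const_mul (1 / 2 : ℝ)).congr_deriv ?_
  field_simp

theorem hasDerivAt_Vr {δa δb e : ℝ} (ha : -δa < e) (hb : e < δb) :
    HasDerivAt (Vr δa δb) (e * eta δa δb e) e := by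
  rcases lt_trichotomy e 0 with hneg | rfl | hpos
  · have hVr : (fun e => 1 / 2 * Real.log (δa ^ 2 / (δa ^ 2 - e ^ 2))) =ᶠ[𝓝 e] Vr δa δb := by
      filter_upwards [Iio_mem_nhds hneg] with s hs
      simp [Vr, not_lt.2 (Set.mem_Iio.1 hs).le]
    rw [eta, if_neg hneg.not_gt]
    exact (hasDerivAt_half_log_barrier (by nlinarith)).congr_of_eventuallyEq hVr.symm
  -- Both branches vanish with slope `0` at the origin, so the one-sided derivatives glue.
  · have hVr0 : Vr δa δb 0 = 0 := by simp [Vr, (show δa ≠ 0 by linarith)]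
    have hleft : HasDerivWithinAt (Vr δa δb) 0 (Set.Iic 0) 0 := by
      have hbranch := (hasDerivAt_half_log_barrier (c := δa) (e := 0)
        (by nlinarith)).hasDerivWithinAt (s := Set.Iic 0)
      refine (hbranch.congr (fun s hs => ?_) ?_).congr_deriv (by simp)
      · simp [Vr, not_lt.2 (Set.mem_Iic.1 hs)]
      · simpa using hVr0
    have hright : HasDerivWithinAt (Vr δa δb) 0 (Set.Ici 0) 0 := by
      have hbranch := (hasDerivAt_half_log_barrier (c := δb) (e := 0)
        (by nlinarith)).hasDerivWithinAt (s := Set.Ici 0)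
      have hb0 : 1 / 2 * Real.log (δb ^ 2 / (δb ^ 2 - 0 ^ 2)) = 0 := by
        simp [(show δb ≠ 0 by linarith)]
      refine (hbranch.congr (fun s hs => ?_) (by rw [hVr0, hb0])).congr_deriv (by simp)
      rcases (Set.mem_Ici.1 hs).eq_or_lt with rfl | hs
      · rw [hVr0, hb0]
      · simp [Vr, hs]
    simpa [Set.Iic_union_Ici] using hleft.union hright
  · have hVr : (fun e => 1 / 2 * Real.log (δb ^ 2 / (δb ^ 2 - e ^ 2))) =ᶠ[𝓝 e] Vr δa δb := by
      filter_upwards [Ioi_mem_nhds hpos] with s hs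
      simp [Vr, Set.mem_Ioi.1 hs]
    rw [eta, if_pos hpos]
    exact (hasDerivAt_half_log_barrier (by nlinarith)).congr_of_eventuallyEq hVr.symm

section Kinematics

variable {x y θ : ℝ → ℝ} {v ω t : ℝ}

theorem hasDerivAt_ebx (xT yT d : ℝ) (hx : HasDerivAt x (v * Real.cos (θ t)) t)
    (hy : HasDerivAt y (v * Real.sin (θ t)) t) (hθ : HasDerivAt θ ω t) :
    HasDerivAt (ebx x y θ xT yT) (v + (eby x y θ xT yT d t - d) * ω) t := by
  have h := ((hx.sub_const xT).mul ((Real.hasDerivAt_cos (θ t)).comp t hθ)).add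
    ((hy.sub_const yT).mul ((Real.hasDerivAt_sin (θ t)).comp t hθ))
  refine h.congr_deriv ?_
  simp only [eby, Function.comp_apply]
  linear_combination v * Real.sin_sq_add_cos_sq (θ t)

theorem hasDerivAt_eby (xT yT d : ℝ) (hx : HasDerivAt x (v * Real.cos (θ t)) t)
    (hy : HasDerivAt y (v * Real.sin (θ t)) t) (hθ : HasDerivAt θ ω t) :
    HasDerivAt (eby x y θ xT yT d) (-ebx x y θ xT yT t * ω) t := by
  have h := ((((hx.sub_const xT).neg).mul ((Real.hasDerivAt_sin (θ t)).comp t hθ)).add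
    ((hy.sub_const yT).mul ((Real.hasDerivAt_cos (θ t)).comp t hθ))).add_const d
  refine h.congr_deriv ?_
  simp only [ebx, Function.comp_apply, Pi.neg_apply]
  ring

theorem hasDerivAt_half_ebx_sq_add_eby_sq (xT yT d : ℝ)
    (hx : HasDerivAt x (v * Real.cos (θ t)) t) (hy : HasDerivAt y (v * Real.sin (θ t)) t)
    (hθ : HasDerivAt θ ω t) :
    HasDerivAt (fun s => 1 / 2 * (ebx x y θ xT yT s ^ 2 + eby x y θ xT yT d s ^ 2))
      ((v - d * ω) * ebx x y θ xT yT t) t := by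
  have h := (((hasDerivAt_ebx xT yT d hx hy hθ).pow 2).add
    ((hasDerivAt_eby xT yT d hx hy hθ).pow 2)).const_mul (1 / 2 : ℝ)
  refine h.congr_deriv ?_
  simp only [Nat.cast_ofNat, Nat.add_one_sub_one, pow_one]
  ring

theorem hasDerivAt_sq_dist {xT yT : ℝ} (hx : HasDerivAt x (v * Real.cos (θ t)) t)
    (hy : HasDerivAt y (v * Real.sin (θ t)) t) :
    HasDerivAt (fun s => (x s - xT) ^ 2 + (y s - yT) ^ 2) (2 * v * ebx x y θ xT yT t) t := by
  refine (((hx.sub_const xT).pow 2).add ((hy.sub_const yT).pow 2)).congr_deriv ?_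
  simp only [ebx, Nat.cast_ofNat, Nat.add_one_sub_one, pow_one]
  ring

theorem hasDerivAt_rng {xT yT : ℝ} (hx : HasDerivAt x (v * Real.cos (θ t)) t)
    (hy : HasDerivAt y (v * Real.sin (θ t)) t) (hr : rng x y xT yT t ≠ 0) :
    HasDerivAt (rng x y xT yT) (v * ebx x y θ xT yT t / rng x y xT yT t) t := by
  have hsq : (x t - xT) ^ 2 + (y t - yT) ^ 2 ≠ 0 := fun h => hr (by simp [rng, h])
  refine ((hasDerivAt_sq_dist hx hy).sqrt hsq).congr_deriv ?_
  rw [rng] at hr ⊢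
  field_simp

theorem hasDerivAt_beta {z : ℝ → ℝ} {κ xT yT : ℝ}
    (hx : HasDerivAt x (v * Real.cos (θ t)) t) (hy : HasDerivAt y (v * Real.sin (θ t)) t)
    (hz : HasDerivAt z (beta x y z κ xT yT t) t) :
    HasDerivAt (beta x y z κ xT yT) (-κ * beta x y z κ xT yT t + v * ebx x y θ xT yT t) t := by
  have hβ : beta x y z κ xT yT =
      fun s => -κ * z s + 1 / 2 * ((x s - xT) ^ 2 + (y s - yT) ^ 2) := by
    funext s
    rw [beta, rng, Real.sq_sqrt (by positivity)]
  nth_rewrite 1 [hβ]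
  exact ((hz.const_mul (-κ)).add ((hasDerivAt_sq_dist hx hy).const_mul (1 / 2 : ℝ))).congr_deriv
    (by ring)

end Kinematics

theorem mul_apply_self_nonneg {Ω : ℝ → ℝ} (hΩ : ∀ s : ℝ, s ≠ 0 → 0 < s * Ω s) (s : ℝ) :
    0 ≤ s * Ω s := by
  rcases eq_or_ne s 0 with rfl | hs
  · simp
  · exact (hΩ s hs).le

theorem V2_derivative_general
    (x y θ z : ℝ → ℝ) (Ω : ℝ → ℝ) (v d k1 k2 κ ri ro xT yT t : ℝ)
    (hΩcont : Continuous Ω) (hΩpos : ∀ s : ℝ, s ≠ 0 → 0 < s * Ω s)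
    (hri : 0 < ri) (hrid : ri < d)
    (hk1 : 0 < k1) (hκ : 0 < κ)
    (hr : rng x y xT yT t ∈ Set.Ioo ri ro)
    (hx : HasDerivAt x (v * Real.cos (θ t)) t)
    (hy : HasDerivAt y (v * Real.sin (θ t)) t)
    (hz : HasDerivAt z (-κ * z t + (1 / 2) * (rng x y xT yT t) ^ 2) t)
    (hθ : HasDerivAt θ (v / d + v * k1 * Ω (beta x y z κ xT yT t) +
      v * k2 * ((rng x y xT yT t - d) / rng x y xT yT t) *
        eta (d - ri) (ro - d) (rng x y xT yT t - d)) t) :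
    HasDerivAt
      (fun s => (1 / 2) * ((ebx x y θ xT yT s) ^ 2 + (eby x y θ xT yT d s) ^ 2) +
        d * k2 * Vr (d - ri) (ro - d) (rng x y xT yT s - d) +
        d * k1 * ∫ τ in (0 : ℝ)..(beta x y z κ xT yT s), Ω τ)
      (-(d * κ * k1 * beta x y z κ xT yT t * Ω (beta x y z κ xT yT t))) t ∧
    -(d * κ * k1 * beta x y z κ xT yT t * Ω (beta x y z κ xT yT t)) ≤ 0 := by
  have hrpos : 0 < rng x y xT yT t := hri.trans hr.1
  have hd : 0 < d := hri.trans hrid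
  have hkin := hasDerivAt_half_ebx_sq_add_eby_sq xT yT d hx hy hθ
  have hbarrier := (hasDerivAt_Vr (δa := d - ri) (δb := ro - d) (by linarith [hr.1])
    (by linarith [hr.2])).comp t ((hasDerivAt_rng hx hy hrpos.ne').sub_const d)
  have hintegral := (hΩcont.integral_hasStrictDerivAt 0 _).hasDerivAt.comp t
    (hasDerivAt_beta hx hy hz)
  refine ⟨((hkin.add (hbarrier.const_mul (d * k2))).add
    (hintegral.const_mul (d * k1))).congr_deriv ?_, ?_⟩
  · field_simp
    ring
  · have hgain : 0 ≤ d * κ * k1 := by positivity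
    nlinarith [mul_nonneg hgain (mul_apply_self_nonneg hΩpos (beta x y z κ xT yT t))]

/-- Along the closed-loop dynamics with the range-only dynamic output
feedback controller, the joint Lyapunov function
V₂(t) = (1/2)(ē_x(t)² + ē_y(t)²) + d·k₂·V_r(r(t) − d) + d·k₁·∫₀^{β(t)} Ω(τ) dτ
is differentiable at t with derivative −d·κ·k₁·β(t)·Ω(β(t)) ≤ 0. -/
theorem V2_derivative
    (x y θ z : ℝ → ℝ) (Ω : ℝ → ℝ) (v d k1 k2 κ ri ro xT yT t : ℝ)
    (hΩcont : Continuous Ω) (hΩ0 : Ω 0 = 0) (hΩpos : ∀ s : ℝ, s ≠ 0 → 0 < s * Ω s)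
    (hv : v ≠ 0) (hri : 0 < ri) (hrid : ri < d) (hdro : d < ro)
    (hk1 : 0 < k1) (hk2 : 0 < k2) (hκ : 0 < κ) (ht : 0 ≤ t)
    (hr : rng x y xT yT t ∈ Set.Ioo ri ro)
    (hx : HasDerivAt x (v * Real.cos (θ t)) t)
    (hy : HasDerivAt y (v * Real.sin (θ t)) t)
    (hz : HasDerivAt z (-κ * z t + (1 / 2) * (rng x y xT yT t) ^ 2) t)
    (hθ : HasDerivAt θ (v / d + v * k1 * Ω (beta x y z κ xT yT t) +
      v * k2 * ((rng x y xT yT t - d) / rng x y xT yT t) *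
        eta (d - ri) (ro - d) (rng x y xT yT t - d)) t) :
    HasDerivAt
      (fun s => (1 / 2) * ((ebx x y θ xT yT s) ^ 2 + (eby x y θ xT yT d s) ^ 2) +
        d * k2 * Vr (d - ri) (ro - d) (rng x y xT yT s - d) +
        d * k1 * ∫ τ in (0 : ℝ)..(beta x y z κ xT yT s), Ω τ)
      (-(d * κ * k1 * beta x y z κ xT yT t * Ω (beta x y z κ xT yT t))) t ∧
    -(d * κ * k1 * beta x y z κ xT yT t * Ω (beta x y z κ xT yT t)) ≤ 0 :=
  V2_derivative_general x y θ z Ω v d k1 k2 κ ri ro xT yT t hΩcont hΩpos hri hrid hk1 hκ hr hx hy hz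
    hθ
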